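/- Define D : ZMod 61 → ℚ by D(s) = d(61,17,i), where i ∈ [0,61) represents s and d is the lens space correction-term recursion. Then there is no subgroup O of (ZMod 61)^4 of order 61 such that D(s₁) + D(s₂) + D(s₃) + D(s₄) = 0 for every (s₁,s₂,s₃,s₄) ∈ O. (This is the correction-term obstruction showing that #⁴ 10_26 is not smoothly slice, so the knot 10_26 does not have order 4 in the smooth concordance group.) -/

import Mathlib

/-- The Ozsváth–Szabó correction term recursion for lens spaces:
`d(p,0,i) = 0` (in particular `d(1,0,0) = 0`) and
`d(p,q,i) = (pq - (2i+1-p-q)^2)/(4pq) - d(q, p mod q, i mod q)`. -/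
def dL : ℕ → ℕ → ℕ → ℚ
  | _, 0, _ => 0
  | p, q + 1, i =>
      ((p : ℚ) * (q + 1) - (2 * (i : ℚ) + 1 - p - (q + 1)) ^ 2) / (4 * p * (q + 1))
        - dL (q + 1) (p % (q + 1)) (i % (q + 1))
  termination_by p q i => q
  decreasing_by
    simp_wf
    exact Nat.le_of_lt_succ (Nat.mod_lt _ (Nat.succ_pos _))

/-- The correction terms of the lens space `L(61,17)`, the double branched cover of
the knot `10_26`, indexed by spin-c structures identified with `ZMod 61`. -/
def D : ZMod 61 → ℚ := fun s => dL 61 17 s.val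


/-!
Summing the vanishing condition over `O` gives `∑ᵢ ∑_{x ∈ O} D(πᵢ x) = 0`, where the `πᵢ` are the
coordinate projections. Since `|O| = 61` is prime, each `πᵢ : O →+ ZMod 61` is either zero or
bijective, so each inner sum is `61 · D 0 = -54` or `∑ₜ D t = -8`; both are negative.
-/

theorem dL_zero (p i : ℕ) : dL p 0 i = 0 := by
  rw [dL]

theorem dL_of_ne_zero (p q i : ℕ) (hq : q ≠ 0) :
    dL p q i = ((p : ℚ) * q - (2 * (i : ℚ) + 1 - p - q) ^ 2) / (4 * p * q)
      - dL q (p % q) (i % q) := by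
  obtain ⟨q, rfl⟩ := Nat.exists_eq_succ_of_ne_zero hq
  rw [dL]
  push_cast
  ring

theorem D_zero : D 0 = -54 / 61 := by
  norm_num [D, dL_of_ne_zero, dL_zero]

theorem sum_D : ∑ t, D t = -8 := by
  rw [show ∑ t, D t = ∑ i ∈ Finset.range 61, dL 61 17 i from
    Fin.sum_univ_eq_sum_range (dL 61 17) 61]
  norm_num [Finset.sum_range_succ, dL_of_ne_zero, dL_zero]

theorem AddMonoidHom.eq_zero_or_bijective_of_card_eq_prime {G H : Type*} [AddGroup G]
    [AddGroup H] [Finite G] (hp : (Nat.card H).Prime) (hcard : Nat.card G = Nat.card H)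
    (φ : G →+ H) : φ = 0 ∨ Function.Bijective φ := by
  have : Fact (Nat.card H).Prime := ⟨hp⟩
  refine φ.range.eq_bot_or_eq_top_of_prime_card.imp range_eq_bot_iff.mp fun htop => ?_
  exact (Nat.bijective_iff_surjective_and_card φ).mpr ⟨φ.range_eq_top.mp htop, hcard⟩

theorem AddMonoidHom.sum_comp_neg_of_card_eq_prime {G H M : Type*} [AddGroup G] [AddGroup H]
    [Fintype G] [Fintype H] [AddCommMonoid M] [PartialOrder M] [IsOrderedCancelAddMonoid M]
    (hp : (Nat.card H).Prime) (hcard : Nat.card G = Nat.card H) (φ : G →+ H) {f : H → M}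
    (hf₀ : f 0 < 0) (hf : ∑ y, f y < 0) : ∑ x, f (φ x) < 0 := by
  rcases φ.eq_zero_or_bijective_of_card_eq_prime hp hcard with rfl | hφ
  · simpa [Finset.card_univ] using nsmul_neg hf₀ Fintype.card_ne_zero
  · rwa [Fintype.sum_bijective φ hφ _ f fun _ => rfl]

/-- There is no subgroup of `(ZMod 61)^4` of order 61 on which all quadruple sums of
correction terms of `L(61,17)` vanish; hence `#⁴ 10_26` is not smoothly slice and the
knot `10_26` does not have order 4 in the smooth concordance group. -/
theorem no_order_four_obstruction_subgroup_10_26 :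
    ¬ ∃ O : AddSubgroup (ZMod 61 × ZMod 61 × ZMod 61 × ZMod 61),
        Nat.card O = 61 ∧
        ∀ s ∈ O, D s.1 + D s.2.1 + D s.2.2.1 + D s.2.2.2 = 0 := by
  rintro ⟨O, hcard, hvan⟩
  classical
  have hp : (Nat.card (ZMod 61)).Prime := by norm_num [Nat.card_zmod]
  have hcard' : Nat.card O = Nat.card (ZMod 61) := by rw [hcard, Nat.card_zmod]
  have hneg (φ : O →+ ZMod 61) : ∑ x, D (φ x) < 0 :=
    φ.sum_comp_neg_of_card_eq_prime hp hcard' (by norm_num [D_zero]) (by norm_num [sum_D])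
  open AddMonoidHom in
  have hlt := add_neg (add_neg (add_neg
    (hneg ((fst _ _).comp O.subtype))
    (hneg ((fst _ _).comp ((snd _ _).comp O.subtype))))
    (hneg ((fst _ _).comp ((snd _ _).comp ((snd _ _).comp O.subtype)))))
    (hneg ((snd _ _).comp ((snd _ _).comp ((snd _ _).comp O.subtype))))
  simp only [← Finset.sum_add_distrib] at hlt
  exact hlt.ne (Finset.sum_eq_zero fun x _ => hvan x x.2)
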